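/- The set G of n-qubit unitaries generated under multiplication by all Pauli X_i operators together with all diagonal gates Z_i, CZ_{ij}, and CCZ_{ijk} is a finite group (up to global phase), and its diagonal elements form exactly the set of operators of the form ∑_{x∈GF(2)^n} (-1)^{g(x)} |x⟩⟨x| with g a cubic polynomial over GF(2). In particular, conjugating any diagonal unitary U_g (g cubic) by a product of X operators yields X^a U_{g'} for some cubic g' with the same degree-3 part as g. -/

import Mathlib

open Finset

/-- A cubic polynomial over `GF(2)` with coefficients `A` (cubic), `B` (quadratic),
`C` (linear) and constant term `c₀`. -/
def cubicPoly (n : ℕ) (A : Fin n → Fin n → Fin n → ZMod 2) (B : Fin n → Fin n → ZMod 2)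
    (C : Fin n → ZMod 2) (c₀ : ZMod 2) : (Fin n → ZMod 2) → ZMod 2 :=
  fun x => (∑ i, ∑ j, ∑ k, A i j k * x i * x j * x k) +
    (∑ i, ∑ j, B i j * x i * x j) + (∑ i, C i * x i) + c₀

/-- Matrix of `X^b : |x⟩ ↦ |x + b⟩`; `X_i` is the case `b = e_i`. -/
def XPow (n : ℕ) (b : Fin n → ZMod 2) :
    Matrix (Fin n → ZMod 2) (Fin n → ZMod 2) ℂ :=
  fun x y => if y = x + b then 1 else 0

/-- The diagonal unitary `U_g = ∑_x (-1)^{g(x)} |x⟩⟨x|`. -/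
noncomputable def UDiag (n : ℕ) (g : (Fin n → ZMod 2) → ZMod 2) :
    Matrix (Fin n → ZMod 2) (Fin n → ZMod 2) ℂ :=
  Matrix.diagonal fun x => (-1 : ℂ) ^ (g x).val

/-- The generating gates: all `X_i`, `Z_i`, `CZ_{ij}` and `CCZ_{ijk}`. -/
noncomputable def gateGens (n : ℕ) :
    Set (Matrix (Fin n → ZMod 2) (Fin n → ZMod 2) ℂ) :=
  (Set.range fun i : Fin n => XPow n (Pi.single i 1)) ∪
  (Set.range fun i : Fin n => UDiag n fun x => x i) ∪
  {M | ∃ i j : Fin n, i ≠ j ∧ M = UDiag n fun x => x i * x j} ∪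
  {M | ∃ i j k : Fin n, i ≠ j ∧ j ≠ k ∧ i ≠ k ∧ M = UDiag n fun x => x i * x j * x k}

/-!
Every element of the gate monoid has the normal form `U_g X^b` with `g` cubic: moving `X^b` past
`U_g` replaces `g` by `x ↦ g (x + b)`, and the finite difference `g (x + b) - g x` of a cubic has
degree at most two, so the cubic part survives and normal forms are closed under multiplication.
There are finitely many normal forms, and `U_g X^b` is diagonal only when `b = 0`. Conversely, the
`g` with `U_g` in the monoid form a `GF(2)`-subspace containing every monomial of degree at most
three, hence every cubic.
-/

variable {n : ℕ}

section Polynomials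

lemma cubicPoly_add (A A' B B' C C' c c') :
    cubicPoly n A B C c + cubicPoly n A' B' C' c' =
      cubicPoly n (A + A') (B + B') (C + C') (c + c') := by
  funext x
  simp only [Pi.add_apply, cubicPoly, add_mul, sum_add_distrib]
  ring

lemma cubicPoly_smul (a : ZMod 2) (A B C c) :
    a • cubicPoly n A B C c = cubicPoly n (a • A) (a • B) (a • C) (a • c) := by
  funext x
  simp only [Pi.smul_apply, smul_eq_mul, cubicPoly, mul_add, mul_sum, mul_assoc]

lemma cubicPoly_zero : cubicPoly n 0 0 0 0 = 0 := by
  funext x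
  simp [cubicPoly]

lemma cubicPoly_const (c : ZMod 2) : cubicPoly n 0 0 0 c = fun _ => c := by
  funext x
  simp [cubicPoly]

lemma cubicPoly_single_linear (i : Fin n) : cubicPoly n 0 0 (Pi.single i 1) 0 = fun x => x i := by
  funext x
  simp [cubicPoly, Pi.single_apply, ite_mul]

lemma cubicPoly_single_quadratic (i j : Fin n) :
    cubicPoly n 0 (Pi.single i (Pi.single j 1)) 0 0 = fun x => x i * x j := by
  funext x
  simp [cubicPoly, Pi.single_apply, ite_apply, ite_mul]

lemma cubicPoly_single_cubic (i j k : Fin n) :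
    cubicPoly n (Pi.single i (Pi.single j (Pi.single k 1))) 0 0 0 = fun x => x i * x j * x k := by
  funext x
  simp [cubicPoly, Pi.single_apply, ite_apply, ite_mul]

lemma cubicPoly_eq_sum_monomials (A B C c) :
    cubicPoly n A B C c =
      (∑ i, ∑ j, ∑ k, A i j k • fun x : Fin n → ZMod 2 => x i * x j * x k) +
      (∑ i, ∑ j, B i j • fun x : Fin n → ZMod 2 => x i * x j) +
      (∑ i, C i • fun x : Fin n → ZMod 2 => x i) + c • 1 := by
  funext x
  simp [cubicPoly, Finset.sum_apply, mul_assoc]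

lemma cubicPoly_mem_of_monomials_mem {P : Submodule (ZMod 2) ((Fin n → ZMod 2) → ZMod 2)}
    (h₃ : ∀ i j k, (fun x : Fin n → ZMod 2 => x i * x j * x k) ∈ P)
    (h₂ : ∀ i j, (fun x : Fin n → ZMod 2 => x i * x j) ∈ P)
    (h₁ : ∀ i, (fun x : Fin n → ZMod 2 => x i) ∈ P) (h₀ : 1 ∈ P) (A B C c) :
    cubicPoly n A B C c ∈ P := by
  rw [cubicPoly_eq_sum_monomials]
  refine add_mem (add_mem (add_mem ?_ ?_) ?_) (P.smul_mem _ h₀) <;>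
    refine sum_mem fun i _ => ?_
  · exact sum_mem fun j _ => sum_mem fun k _ => P.smul_mem _ (h₃ i j k)
  · exact sum_mem fun j _ => P.smul_mem _ (h₂ i j)
  · exact P.smul_mem _ (h₁ i)

variable (n) in
def quadraticPolys : Submodule (ZMod 2) ((Fin n → ZMod 2) → ZMod 2) where
  carrier := {f | ∃ B C c, f = cubicPoly n 0 B C c}
  zero_mem' := ⟨0, 0, 0, cubicPoly_zero.symm⟩
  add_mem' := by
    rintro _ _ ⟨B, C, c, rfl⟩ ⟨B', C', c', rfl⟩
    exact ⟨B + B', C + C', c + c', by rw [cubicPoly_add, add_zero]⟩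
  smul_mem' := by
    rintro a _ ⟨B, C, c, rfl⟩
    exact ⟨a • B, a • C, a • c, by rw [cubicPoly_smul, smul_zero]⟩

lemma one_mem_quadraticPolys : (1 : (Fin n → ZMod 2) → ZMod 2) ∈ quadraticPolys n :=
  ⟨0, 0, 1, (cubicPoly_const 1).symm⟩

lemma coord_mem_quadraticPolys (i : Fin n) : (fun x : Fin n → ZMod 2 => x i) ∈ quadraticPolys n :=
  ⟨0, Pi.single i 1, 0, (cubicPoly_single_linear i).symm⟩

lemma coord_mul_coord_mem_quadraticPolys (i j : Fin n) :
    (fun x : Fin n → ZMod 2 => x i * x j) ∈ quadraticPolys n :=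
  ⟨Pi.single i (Pi.single j 1), 0, 0, (cubicPoly_single_quadratic i j).symm⟩

def finiteDifference (b : Fin n → ZMod 2) :
    ((Fin n → ZMod 2) → ZMod 2) →ₗ[ZMod 2] (Fin n → ZMod 2) → ZMod 2 :=
  LinearMap.funLeft (ZMod 2) (ZMod 2) (· + b) - LinearMap.id

lemma finiteDifference_apply (b : Fin n → ZMod 2) (f : (Fin n → ZMod 2) → ZMod 2) :
    finiteDifference b f = fun x => f (x + b) - f x :=
  rfl

lemma finiteDifference_cubicPoly_mem_quadraticPolys (b : Fin n → ZMod 2) (A B C c) :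
    finiteDifference b (cubicPoly n A B C c) ∈ quadraticPolys n := by
  refine cubicPoly_mem_of_monomials_mem (P := (quadraticPolys n).comap (finiteDifference b))
    (fun i j k => ?_) (fun i j => ?_) (fun i => ?_) ?_ A B C c <;>
    rw [Submodule.mem_comap]
  · have h : finiteDifference b (fun x => x i * x j * x k) =
        b i • (fun x => x j * x k) + b j • (fun x => x i * x k) + b k • (fun x => x i * x j) +
        (b i * b j) • (fun x => x k) + (b i * b k) • (fun x => x j) +
        (b j * b k) • (fun x => x i) + (b i * b j * b k) • 1 := by
      funext x
      simp only [finiteDifference_apply, Pi.add_apply, Pi.smul_apply, smul_eq_mul, Pi.one_apply]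
      ring
    rw [h]
    apply_rules [add_mem, Submodule.smul_mem, one_mem_quadraticPolys, coord_mem_quadraticPolys,
      coord_mul_coord_mem_quadraticPolys]
  · have h : finiteDifference b (fun x => x i * x j) =
        b i • (fun x => x j) + b j • (fun x => x i) + (b i * b j) • 1 := by
      funext x
      simp only [finiteDifference_apply, Pi.add_apply, Pi.smul_apply, smul_eq_mul, Pi.one_apply]
      ring
    rw [h]
    apply_rules [add_mem, Submodule.smul_mem, one_mem_quadraticPolys, coord_mem_quadraticPolys]
  · have h : finiteDifference b (fun x => x i) = b i • 1 := by
      funext x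
      simp [finiteDifference_apply]
    rw [h]
    exact Submodule.smul_mem _ _ one_mem_quadraticPolys
  · have h : finiteDifference b (1 : (Fin n → ZMod 2) → ZMod 2) = 0 := by
      funext x
      simp [finiteDifference_apply]
    rw [h]
    exact zero_mem _

lemma cubicPoly_comp_add (b : Fin n → ZMod 2) (A B C c) :
    ∃ B' C' c', (fun x => cubicPoly n A B C c (x + b)) = cubicPoly n A B' C' c' := by
  obtain ⟨B', C', c', h⟩ := add_mem (finiteDifference_cubicPoly_mem_quadraticPolys b A B C c)
    (show cubicPoly n 0 B C c ∈ quadraticPolys n from ⟨B, C, c, rfl⟩)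
  refine ⟨B', C', c', ?_⟩
  calc (fun x => cubicPoly n A B C c (x + b))
      = finiteDifference b (cubicPoly n A B C c) + cubicPoly n 0 B C c + cubicPoly n A 0 0 0 := by
        rw [add_assoc, cubicPoly_add, zero_add, add_zero, add_zero, add_zero]
        funext x
        simp [finiteDifference_apply]
    _ = cubicPoly n A B' C' c' := by
        rw [h, cubicPoly_add, zero_add, add_zero, add_zero, add_zero]

end Polynomials

section Gates

lemma neg_one_pow_val_add {R : Type*} [Ring R] (a b : ZMod 2) :
    (-1 : R) ^ (a + b).val = (-1) ^ a.val * (-1) ^ b.val := by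
  rw [ZMod.val_add, ← neg_one_pow_eq_pow_mod_two, pow_add]

lemma UDiag_add (g h : (Fin n → ZMod 2) → ZMod 2) :
    UDiag n (g + h) = UDiag n g * UDiag n h := by
  simp only [UDiag, Matrix.diagonal_mul_diagonal, Pi.add_apply, neg_one_pow_val_add]

lemma UDiag_zero : UDiag n 0 = 1 := by
  simp [UDiag]

lemma XPow_add (b c : Fin n → ZMod 2) : XPow n (b + c) = XPow n b * XPow n c := by
  ext x y
  simp only [Matrix.mul_apply, XPow, ite_mul, one_mul, zero_mul, sum_ite_eq', mem_univ, if_true,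
    add_assoc]

lemma XPow_zero : XPow n 0 = 1 := by
  ext x y
  simp [XPow, Matrix.one_apply, eq_comm]

lemma XPow_mul_UDiag (b : Fin n → ZMod 2) (g : (Fin n → ZMod 2) → ZMod 2) :
    XPow n b * UDiag n g = UDiag n (fun x => g (x + b)) * XPow n b := by
  ext x y
  rw [UDiag, UDiag, Matrix.mul_diagonal, Matrix.diagonal_mul]
  by_cases h : y = x + b <;> simp [XPow, h]

lemma XPow_mul_UDiag_mul_XPow (b : Fin n → ZMod 2) (g : (Fin n → ZMod 2) → ZMod 2) :
    XPow n b * UDiag n g * XPow n b = UDiag n (fun x => g (x + b)) := by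
  rw [XPow_mul_UDiag, mul_assoc, ← XPow_add, ZModModule.add_self, XPow_zero, mul_one]

lemma UDiag_mul_XPow_apply (g : (Fin n → ZMod 2) → ZMod 2) (b x y : Fin n → ZMod 2) :
    (UDiag n g * XPow n b) x y = if y = x + b then (-1) ^ (g x).val else 0 := by
  simp [UDiag, Matrix.diagonal_mul, XPow]

lemma eq_zero_of_isDiag_UDiag_mul_XPow {g : (Fin n → ZMod 2) → ZMod 2} {b : Fin n → ZMod 2}
    (hdiag : (UDiag n g * XPow n b).IsDiag) : b = 0 := by
  by_contra hb
  have h : (UDiag n g * XPow n b) 0 b = 0 := hdiag (Ne.symm hb)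
  rw [UDiag_mul_XPow_apply, if_pos (zero_add b).symm] at h
  exact pow_ne_zero _ (neg_ne_zero.mpr one_ne_zero) h

end Gates

section GateGroup

variable (n) in
def gateNormalForms : Submonoid (Matrix (Fin n → ZMod 2) (Fin n → ZMod 2) ℂ) where
  carrier := {M | ∃ A B C c b, M = UDiag n (cubicPoly n A B C c) * XPow n b}
  one_mem' := ⟨0, 0, 0, 0, 0, by rw [cubicPoly_zero, UDiag_zero, XPow_zero, one_mul]⟩
  mul_mem' := by
    rintro _ _ ⟨A, B, C, c, b, rfl⟩ ⟨A', B', C', c', b', rfl⟩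
    obtain ⟨B'', C'', c'', hshift⟩ := cubicPoly_comp_add b A' B' C' c'
    refine ⟨A + A', B + B'', C + C'', c + c'', b + b', ?_⟩
    calc UDiag n (cubicPoly n A B C c) * XPow n b * (UDiag n (cubicPoly n A' B' C' c') * XPow n b')
        = UDiag n (cubicPoly n A B C c) * (XPow n b * UDiag n (cubicPoly n A' B' C' c')) *
            XPow n b' := by
          simp only [mul_assoc]
      _ = UDiag n (cubicPoly n A B C c + cubicPoly n A' B'' C'' c'') * XPow n (b + b') := by
          rw [XPow_mul_UDiag, hshift, UDiag_add, XPow_add]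
          simp only [mul_assoc]
      _ = UDiag n (cubicPoly n (A + A') (B + B'') (C + C'') (c + c'')) * XPow n (b + b') := by
          rw [cubicPoly_add]

lemma UDiag_mem_gateNormalForms (A B C c) :
    UDiag n (cubicPoly n A B C c) ∈ gateNormalForms n :=
  ⟨A, B, C, c, 0, by rw [XPow_zero, mul_one]⟩

lemma closure_gateGens_le_gateNormalForms : Submonoid.closure (gateGens n) ≤ gateNormalForms n := by
  rw [Submonoid.closure_le]
  rintro _ (((⟨i, rfl⟩ | ⟨i, rfl⟩) | ⟨i, j, -, rfl⟩) | ⟨i, j, k, -, -, -, rfl⟩)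
  · exact ⟨0, 0, 0, 0, Pi.single i 1, by rw [cubicPoly_zero, UDiag_zero, one_mul]⟩
  · simpa only [SetLike.mem_coe, cubicPoly_single_linear] using
      UDiag_mem_gateNormalForms 0 0 (Pi.single i 1) 0
  · simpa only [SetLike.mem_coe, cubicPoly_single_quadratic] using
      UDiag_mem_gateNormalForms 0 (Pi.single i (Pi.single j 1)) 0 0
  · simpa only [SetLike.mem_coe, cubicPoly_single_cubic] using
      UDiag_mem_gateNormalForms (Pi.single i (Pi.single j (Pi.single k 1))) 0 0 0

variable (n) in
def gatePhaseFunctions : Submodule (ZMod 2) ((Fin n → ZMod 2) → ZMod 2) where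
  carrier := {g | UDiag n g ∈ Submonoid.closure (gateGens n)}
  zero_mem' := by
    show UDiag n 0 ∈ Submonoid.closure (gateGens n)
    rw [UDiag_zero]
    exact one_mem _
  add_mem' {g h} hg hh := by
    show UDiag n (g + h) ∈ Submonoid.closure (gateGens n)
    rw [UDiag_add]
    exact mul_mem hg hh
  smul_mem' a g hg := by
    show UDiag n (a • g) ∈ Submonoid.closure (gateGens n)
    obtain rfl | rfl : a = 0 ∨ a = 1 := by revert a; decide
    · rw [zero_smul, UDiag_zero]
      exact one_mem _
    · rwa [one_smul]

lemma coord_mem_gatePhaseFunctions (i : Fin n) :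
    (fun x : Fin n → ZMod 2 => x i) ∈ gatePhaseFunctions n :=
  Submonoid.subset_closure (Or.inl (Or.inl (Or.inr ⟨i, rfl⟩)))

lemma mul_self_zmod_two (a : ZMod 2) : a * a = a := by
  rw [← sq, ZMod.pow_card]

lemma coord_mul_coord_mem_gatePhaseFunctions (i j : Fin n) :
    (fun x : Fin n → ZMod 2 => x i * x j) ∈ gatePhaseFunctions n := by
  by_cases hij : i = j
  · subst hij
    simpa only [mul_self_zmod_two] using coord_mem_gatePhaseFunctions i
  · exact Submonoid.subset_closure (Or.inl (Or.inr ⟨i, j, hij, rfl⟩))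

lemma coord_mul_coord_mul_coord_mem_gatePhaseFunctions (i j k : Fin n) :
    (fun x : Fin n → ZMod 2 => x i * x j * x k) ∈ gatePhaseFunctions n := by
  by_cases hij : i = j
  · subst hij
    simpa only [mul_self_zmod_two] using coord_mul_coord_mem_gatePhaseFunctions i k
  by_cases hjk : j = k
  · subst hjk
    simpa only [mul_assoc, mul_self_zmod_two] using coord_mul_coord_mem_gatePhaseFunctions i j
  by_cases hik : i = k
  · subst hik
    simpa only [mul_right_comm _ _ (_ : ZMod 2), mul_self_zmod_two] using
      coord_mul_coord_mem_gatePhaseFunctions i j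
  exact Submonoid.subset_closure (Or.inr ⟨i, j, k, hij, hjk, hik, rfl⟩)

-- `X_i Z_i X_i = U_{x_i + 1}`, so `X_i Z_i X_i Z_i` is the global phase `-1`.
lemma one_mem_gatePhaseFunctions (hn : 1 ≤ n) : 1 ∈ gatePhaseFunctions n := by
  let i : Fin n := ⟨0, hn⟩
  have hX : XPow n (Pi.single i 1) ∈ Submonoid.closure (gateGens n) :=
    Submonoid.subset_closure (Or.inl (Or.inl (Or.inl ⟨i, rfl⟩)))
  have hZ := coord_mem_gatePhaseFunctions i
  have hconj : (fun x : Fin n → ZMod 2 => x i + 1) ∈ gatePhaseFunctions n := by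
    have h := mul_mem (mul_mem hX hZ) hX
    rwa [XPow_mul_UDiag_mul_XPow] at h
  have h := add_mem hconj hZ
  convert h using 1
  funext x
  simp [add_right_comm, ZModModule.add_self]

lemma UDiag_cubicPoly_mem_closure (hn : 1 ≤ n) (A B C c) :
    UDiag n (cubicPoly n A B C c) ∈ Submonoid.closure (gateGens n) :=
  cubicPoly_mem_of_monomials_mem (P := gatePhaseFunctions n)
    coord_mul_coord_mul_coord_mem_gatePhaseFunctions coord_mul_coord_mem_gatePhaseFunctions
    coord_mem_gatePhaseFunctions (one_mem_gatePhaseFunctions hn) A B C c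

end GateGroup

/-- The group generated by the `X_i`, `Z_i`, `CZ_{ij}`, `CCZ_{ijk}` gates is finite
(global phases being only `±1`), its diagonal elements are exactly the operators
`∑_x (-1)^{g(x)}|x⟩⟨x|` with `g` a cubic polynomial over `GF(2)`, and conjugating a
cubic diagonal unitary by a product of `X` operators yields a cubic diagonal unitary
with the same degree-3 part. -/
theorem gate_group_finite_diagonal_cubic (n : ℕ) (hn : 1 ≤ n) :
    (Submonoid.closure (gateGens n) : Set (Matrix (Fin n → ZMod 2) (Fin n → ZMod 2) ℂ)).Finite ∧
    (∀ A B C c₀, UDiag n (cubicPoly n A B C c₀) ∈ Submonoid.closure (gateGens n)) ∧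
    (∀ M ∈ Submonoid.closure (gateGens n),
      (M.IsDiag ↔ ∃ A B C c₀, M = UDiag n (cubicPoly n A B C c₀))) ∧
    (∀ (b : Fin n → ZMod 2) A B C c₀, ∃ B' C' c₀',
      XPow n b * UDiag n (cubicPoly n A B C c₀) * XPow n b
        = UDiag n (cubicPoly n A B' C' c₀')) := by
  have normalForm : ∀ M ∈ Submonoid.closure (gateGens n),
      ∃ A B C c b, M = UDiag n (cubicPoly n A B C c) * XPow n b :=
    fun M hM => closure_gateGens_le_gateNormalForms hM
  refine ⟨?finite, UDiag_cubicPoly_mem_closure hn, fun M hM => ?diagonal, fun b A B C c => ?conj⟩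
  case finite =>
    refine (Set.finite_range fun p : ((Fin n → ZMod 2) → ZMod 2) × (Fin n → ZMod 2) =>
      UDiag n p.1 * XPow n p.2).subset fun M hM => ?_
    obtain ⟨A, B, C, c, b, rfl⟩ := normalForm M hM
    exact ⟨(cubicPoly n A B C c, b), rfl⟩
  case diagonal =>
    obtain ⟨A, B, C, c, b, rfl⟩ := normalForm M hM
    refine ⟨fun hdiag => ⟨A, B, C, c, ?_⟩, fun ⟨_, _, _, _, h⟩ => h ▸ Matrix.isDiag_diagonal _⟩
    rw [eq_zero_of_isDiag_UDiag_mul_XPow hdiag, XPow_zero, mul_one]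
  case conj =>
    obtain ⟨B', C', c', h⟩ := cubicPoly_comp_add b A B C c
    exact ⟨B', C', c', by rw [XPow_mul_UDiag_mul_XPow, h]⟩
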